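/- arXiv:2407.10171 — 4 statements merged into one kernel-verified Lean document; each statement's English description precedes it below -/
import Mathlib

section
/- The vertex separation number of a graph equals the minimum over all path-decompositions of (max bag size minus one); i.e., for every graph G, min over orderings f of max_v pw_f(v) equals the pathwidth of G defined via path-decompositions. -/
def IsPathDecomp {V : Type*} (G : SimpleGraph V) (ℓ : ℕ) (X : Fin ℓ → Set V) : Prop :=
  (∀ u w, G.Adj u w → ∃ i, u ∈ X i ∧ w ∈ X i) ∧
  ∀ i j k : Fin ℓ, i ≤ j → j ≤ k → X i ∩ X k ⊆ X j

noncomputable def pwG {V : Type*} (G : SimpleGraph V) : ℕ :=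
  sInf {n | ∃ ℓ : ℕ, ∃ X : Fin ℓ → Set V, IsPathDecomp G ℓ X ∧ ∀ i, (X i).ncard ≤ n + 1}

/-!
An ordering `v₁, …, vₙ` of the vertices yields the path-decomposition whose `i`-th bag is `vᵢ`
together with the vertices before `vᵢ` that have a neighbour at or after `vᵢ`; this is the
separation set of `vᵢ₋₁` plus one vertex. Conversely, order the vertices of a path-decomposition
by the first bag containing them. For a vertex `v`, let `w` be a vertex after `v` adjacent to a
vertex at or before `v` whose first bag `j` is earliest. Every vertex `u` of the separation set
of `v` then lies in bag `j` by the interval property (it enters no later than `w` and meets its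
own later neighbour in a bag not before `j`), and `u ≠ w`; so the separation set has at most
`|X j| - 1` elements.
-/

namespace SimpleGraph

variable {V α : Type*} (G : SimpleGraph V) [LinearOrder α]

def separationSet (f : V → α) (v : V) : Set V :=
  {u | f u ≤ f v ∧ ∃ w, G.Adj u w ∧ f v < f w}

def orderBag (f : V → α) (i : α) : Set V :=
  {u | f u ≤ i ∧ ∃ w, (u = w ∨ G.Adj u w) ∧ i ≤ f w}

theorem isPathDecomp_orderBag {n : ℕ} (f : V ≃ Fin n) :
    IsPathDecomp G n (G.orderBag f) := by
  have both_in_later (u w : V) (huw : G.Adj u w) (hlt : f u < f w) :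
      u ∈ G.orderBag f (f w) ∧ w ∈ G.orderBag f (f w) :=
    ⟨⟨hlt.le, w, Or.inr huw, le_rfl⟩, ⟨le_rfl, w, Or.inl rfl, le_rfl⟩⟩
  constructor
  · intro u w huw
    rcases lt_or_gt_of_ne (f.injective.ne huw.ne) with h | h
    · exact ⟨_, both_in_later u w huw h⟩
    · exact ⟨_, (both_in_later w u huw.symm h).symm⟩
  · rintro i j k hij hjk u ⟨⟨hui, -⟩, -, w, huw, hkw⟩
    exact ⟨hui.trans hij, w, huw, hjk.trans hkw⟩

theorem orderBag_subset_insert {n : ℕ} (f : V ≃ Fin n) (i : Fin n) :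
    G.orderBag f i ⊆ insert (f.symm i) {u | f u < i ∧ ∃ w, G.Adj u w ∧ i ≤ f w} := by
  rintro u ⟨hui, w, rfl | huw, hiw⟩
  · exact Or.inl (f.eq_symm_apply.mpr (le_antisymm hui hiw))
  · rcases hui.lt_or_eq with hlt | rfl
    · exact Or.inr ⟨hlt, w, huw, hiw⟩
    · exact Or.inl (f.symm_apply_apply u).symm

theorem setOf_lt_and_adj_eq_separationSet {n : ℕ} (f : V ≃ Fin n) {v : V} {i : Fin n}
    (hvi : (f v : ℕ) + 1 = i) :
    {u | f u < i ∧ ∃ w, G.Adj u w ∧ i ≤ f w} = G.separationSet f v := by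
  ext u
  simp only [separationSet, Set.mem_ofPred_eq, Fin.lt_def, Fin.le_def]
  constructor <;> rintro ⟨h₁, w, huw, h₂⟩ <;> exact ⟨by omega, w, huw, by omega⟩

theorem ncard_orderBag_le [Finite V] {n : ℕ} (f : V ≃ Fin n) (i : Fin n) :
    (G.orderBag f i).ncard ≤ (⨆ v, (G.separationSet f v).ncard) + 1 := by
  refine (Set.ncard_le_ncard (G.orderBag_subset_insert f i)).trans
    ((Set.ncard_insert_le _ _).trans (Nat.add_le_add_right ?_ 1))
  rcases Nat.eq_zero_or_eq_succ_pred (i : ℕ) with hi | hi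
  · simp [Fin.lt_def, hi]
  · let v := f.symm ⟨(i : ℕ) - 1, by omega⟩
    have hvi : (f v : ℕ) + 1 = i := by simp only [v, Equiv.apply_symm_apply]; omega
    rw [G.setOf_lt_and_adj_eq_separationSet f hvi]
    exact le_ciSup (Set.finite_range fun v => (G.separationSet f v).ncard).bddAbove v

end SimpleGraph

theorem IsPathDecomp.mem_of_le_of_le {V : Type*} {G : SimpleGraph V} {ℓ : ℕ}
    {X : Fin ℓ → Set V} (hX : IsPathDecomp G ℓ X) {i j k : Fin ℓ} {u : V}
    (hi : u ∈ X i) (hk : u ∈ X k) (hij : i ≤ j) (hjk : j ≤ k) : u ∈ X j :=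
  hX.2 i j k hij hjk ⟨hi, hk⟩

section FirstBag

variable {V : Type*} {ℓ : ℕ}

/-- Vertices lying in no bag get the junk value `0`. -/
noncomputable def firstBag (X : Fin ℓ → Set V) (v : V) : ℕ :=
  sInf {i | ∃ h : i < ℓ, v ∈ X ⟨i, h⟩}

theorem firstBag_spec {X : Fin ℓ → Set V} {v : V} {i : Fin ℓ} (hv : v ∈ X i) :
    ∃ h : firstBag X v < ℓ, v ∈ X ⟨firstBag X v, h⟩ ∧ firstBag X v ≤ i :=
  have hne : {m | ∃ h : m < ℓ, v ∈ X ⟨m, h⟩}.Nonempty := ⟨i, i.isLt, hv⟩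
  ⟨(Nat.sInf_mem hne).1, (Nat.sInf_mem hne).2, Nat.sInf_le ⟨i.isLt, hv⟩⟩

theorem exists_equiv_fin_le_imp_le [Fintype V] {β : Type*} [LinearOrder β] (g : V → β) :
    ∃ f : V ≃ Fin (Fintype.card V), ∀ a b, f a ≤ f b → g a ≤ g b := by
  let e := Fintype.equivFin V
  let σ := Tuple.sort (g ∘ e.symm)
  refine ⟨e.trans σ.symm, fun a b hab => ?_⟩
  simpa [σ, Function.comp_def] using Tuple.monotone_sort (g ∘ e.symm) hab

variable {α : Type*} [LinearOrder α] {G : SimpleGraph V} {X : Fin ℓ → Set V}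

theorem exists_separationSet_subset_diff [Finite V] (hX : IsPathDecomp G ℓ X) (f : V → α)
    (hf : ∀ a b, f a ≤ f b → firstBag X a ≤ firstBag X b) (v : V)
    (hv : (G.separationSet f v).Nonempty) :
    ∃ j w, w ∈ X j ∧ G.separationSet f v ⊆ X j \ {w} := by
  obtain ⟨u₀, hu₀v, w₀, hu₀w₀, hvw₀⟩ := hv
  obtain ⟨w, ⟨hvw, u', hu'v, hu'w⟩, hw_min⟩ := Set.exists_min_image
    {w | f v < f w ∧ ∃ u, f u ≤ f v ∧ G.Adj u w} (firstBag X) (Set.toFinite _)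
    ⟨w₀, hvw₀, u₀, hu₀v, hu₀w₀⟩
  obtain ⟨_, -, hw⟩ := hX.1 u' w hu'w
  obtain ⟨_, hw_mem, -⟩ := firstBag_spec hw
  refine ⟨_, w, hw_mem, ?_⟩
  rintro u ⟨huv, x, hux, hvx⟩
  obtain ⟨i, hui, hxi⟩ := hX.1 u x hux
  obtain ⟨_, hu_mem, -⟩ := firstBag_spec hui
  have hx_le := (firstBag_spec hxi).2.2
  have hu_ne : u ≠ w := fun h => (huv.trans_lt hvw).ne (congrArg f h)
  refine ⟨hX.mem_of_le_of_le hu_mem hui ?_ ?_, hu_ne⟩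
  · exact hf u w (huv.trans hvw.le)
  · exact (hw_min x ⟨hvx, u, huv, hux⟩).trans hx_le

theorem ncard_separationSet_le [Finite V] (hX : IsPathDecomp G ℓ X) {k : ℕ}
    (hk : ∀ i, (X i).ncard ≤ k + 1) (f : V → α)
    (hf : ∀ a b, f a ≤ f b → firstBag X a ≤ firstBag X b) (v : V) :
    (G.separationSet f v).ncard ≤ k := by
  rcases (G.separationSet f v).eq_empty_or_nonempty with hv | hv
  · simp [hv]
  obtain ⟨j, w, hw, hsub⟩ := exists_separationSet_subset_diff hX f hf v hv
  calc (G.separationSet f v).ncard ≤ (X j \ {w}).ncard := Set.ncard_le_ncard hsub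
    _ = (X j).ncard - 1 := Set.ncard_sdiff_singleton_of_mem hw
    _ ≤ k := by have := hk j; omega

end FirstBag

theorem pwG_le {V : Type*} {G : SimpleGraph V} {ℓ k : ℕ} {X : Fin ℓ → Set V}
    (hX : IsPathDecomp G ℓ X) (hk : ∀ i, (X i).ncard ≤ k + 1) : pwG G ≤ k :=
  Nat.sInf_le ⟨ℓ, X, hX, hk⟩

theorem exists_isPathDecomp_ncard_le_pwG {V : Type*} [Finite V] (G : SimpleGraph V) :
    ∃ ℓ, ∃ X : Fin ℓ → Set V, IsPathDecomp G ℓ X ∧ ∀ i, (X i).ncard ≤ pwG G + 1 := by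
  have univ_bag : IsPathDecomp G 1 fun _ => Set.univ :=
    ⟨fun _ _ _ => ⟨0, trivial, trivial⟩, fun _ _ _ _ _ _ _ => trivial⟩
  exact Nat.sInf_mem (s := {n | ∃ ℓ, ∃ X : Fin ℓ → Set V, IsPathDecomp G ℓ X ∧
    ∀ i, (X i).ncard ≤ n + 1}) ⟨Nat.card V, 1, _, univ_bag, fun _ => by simp⟩

/-- The vertex separation number (min over orderings of the max vertex
separation) equals the pathwidth defined via path-decompositions. -/
theorem vs_eq_pw {V : Type*} [Fintype V] (G : SimpleGraph V) :
    (⨅ f : V ≃ Fin (Fintype.card V), ⨆ v : V,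
        {u : V | f u ≤ f v ∧ ∃ w, G.Adj u w ∧ f v < f w}.ncard) = pwG G := by
  apply le_antisymm
  · obtain ⟨ℓ, X, hX, hk⟩ := exists_isPathDecomp_ncard_le_pwG G
    obtain ⟨f, hf⟩ := exists_equiv_fin_le_imp_le (firstBag X)
    exact ciInf_le_of_le (OrderBot.bddBelow _) f
      (ciSup_le' (ncard_separationSet_le hX hk f hf))
  · have : Nonempty (V ≃ Fin (Fintype.card V)) := ⟨Fintype.equivFin V⟩
    exact le_ciInf fun f => pwG_le (G.isPathDecomp_orderBag f) (G.ncard_orderBag_le f)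
end

section
/- Given a vertex ordering f of a graph G with vertex separation k = max_v pw_f(v), the family of intervals I_u = [f(u), max_{w ∈ N[u]} f(w)] for u ∈ V has the property that at most k + 1 of these intervals share any common point; equivalently, the associated interval graph has clique number at most k + 1. -/
/-- Given an ordering `f` with vertex separation `k = max_v pw_f(v)`, the
intervals `I_u = [f u, max_{w ∈ N[u]} f w]` have the property that at most `k + 1` of
them share any common point. -/
theorem interval_clique_le {V : Type*} [Fintype V] (G : SimpleGraph V)
    (f : V ≃ Fin (Fintype.card V)) (k : ℕ)
    (hk : k = ⨆ v : V, {u : V | f u ≤ f v ∧ ∃ w, G.Adj u w ∧ f v < f w}.ncard)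
    (x : ℕ) :
    {u : V | (f u : ℕ) ≤ x ∧ x ≤ ⨆ w ∈ insert u {w | G.Adj u w}, (f w : ℕ)}.ncard
      ≤ k + 1 := by
  classical
  set S := {u : V | (f u : ℕ) ≤ x ∧ x ≤ ⨆ w ∈ insert u {w | G.Adj u w}, (f w : ℕ)} with hS
  by_cases hx : x = 0
  · subst hx
    have hsing : S.Subsingleton := by
      intro a ha b hb
      have h1 : (f a : ℕ) = 0 := Nat.le_zero.mp ha.1
      have h2 : (f b : ℕ) = 0 := Nat.le_zero.mp hb.1
      exact f.injective (Fin.ext (h1.trans h2.symm))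
    rcases hsing.eq_empty_or_singleton with h | ⟨a, h⟩ <;> simp [h]
  -- extraction lemma
  have extract : ∀ u ∈ S, ∃ w, w ∈ insert u {w | G.Adj u w} ∧ x ≤ (f w : ℕ) := by
    intro u hu
    haveI : Nonempty V := ⟨u⟩
    have h1 : (x - 1 : ℕ) < ⨆ w ∈ insert u {w | G.Adj u w}, (f w : ℕ) :=
      lt_of_lt_of_le (by omega) hu.2
    obtain ⟨w, hw⟩ := exists_lt_of_lt_ciSup h1
    by_cases hws : w ∈ insert u {w | G.Adj u w}
    · refine ⟨w, hws, ?_⟩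
      rw [ciSup_pos hws] at hw
      omega
    · haveI : IsEmpty (w ∈ insert u {w | G.Adj u w} : Prop) := ⟨hws⟩
      rw [ciSup_of_empty] at hw
      simp at hw
  by_cases hcard : x < Fintype.card V
  · set v := f.symm ⟨x, hcard⟩ with hv
    set v' := f.symm ⟨x - 1, by omega⟩ with hv'
    have hfv : (f v : ℕ) = x := by simp [hv]
    have hfv' : (f v' : ℕ) = x - 1 := by simp [hv']
    have hsub : S ⊆ insert v {u : V | f u ≤ f v' ∧ ∃ w, G.Adj u w ∧ f v' < f w} := by
      intro u hu
      obtain ⟨w, hws, hxw⟩ := extract u hu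
      by_cases huv : u = v
      · exact Or.inl huv
      right
      have hfu : (f u : ℕ) ≠ x := fun h => huv (by
        apply f.injective; exact Fin.ext (by simp [hfv, h]))
      have hfu' : (f u : ℕ) ≤ x - 1 := by
        have := hu.1; omega
      rcases hws with rfl | hadj
      · exfalso; omega
      refine ⟨?_, w, hadj, ?_⟩
      · rw [Fin.le_def, hfv']; exact hfu'
      · rw [Fin.lt_def, hfv']; omega
    calc S.ncard ≤ (insert v {u : V | f u ≤ f v' ∧ ∃ w, G.Adj u w ∧ f v' < f w}).ncard :=
          Set.ncard_le_ncard hsub (Set.toFinite _)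
      _ ≤ {u : V | f u ≤ f v' ∧ ∃ w, G.Adj u w ∧ f v' < f w}.ncard + 1 :=
          Set.ncard_insert_le _ _
      _ ≤ k + 1 := by
          have hle : {u : V | f u ≤ f v' ∧ ∃ w, G.Adj u w ∧ f v' < f w}.ncard ≤
              ⨆ v : V, {u : V | f u ≤ f v ∧ ∃ w, G.Adj u w ∧ f v < f w}.ncard :=
            le_ciSup (f := fun v : V => {u : V | f u ≤ f v ∧ ∃ w, G.Adj u w ∧ f v < f w}.ncard) (Set.Finite.bddAbove (Set.finite_range _)) v'
          omega
  · have hSe : S = ∅ := by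
      ext u
      simp only [Set.mem_empty_iff_false, iff_false]
      intro hu
      obtain ⟨w, _, hxw⟩ := extract u hu
      have := (f w).isLt
      omega
    simp [hSe]
end

section
/- Let D be a finite directed bipartite-like graph on vertex set V_H ∪ V_P in which there are no arcs between two vertices of V_P. Define D' on vertex set V_H with arcs: all arcs of D between vertices of V_H, plus an arc (h, h') whenever D has arcs (h, p) and (p, h') for some p ∈ V_P. Then a subset X ⊆ V_H is a feedback vertex set of D' if and only if it is a feedback vertex set of D. -/
/-! A directed cycle of `D` avoiding `X` cannot stay inside `V_P`, so it can be rotated to start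
at a vertex of `V_H`; every visit to `V_P` on it is then a two-arc detour `h → p → h'` that `D'`
replaces by a single arc. Conversely each arc of `D'` is an arc or a two-arc path of `D`, and
the middle vertex of such a path lies in `V_P`, which `X` does not meet. -/

/-- `X` is a feedback vertex set of the digraph with arc relation `A`: removing `X` leaves
no directed cycle. -/
def FVS {V : Type*} (A : V → V → Prop) (X : Set V) : Prop :=
  ∀ v ∉ X, ¬ Relation.TransGen (fun u w => A u w ∧ u ∉ X ∧ w ∉ X) v v

open Relation

def deleteVerts {V : Type*} (A : V → V → Prop) (X : Set V) : V → V → Prop :=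
  fun u w => A u w ∧ u ∉ X ∧ w ∉ X

def bypass {V : Type*} (r : V → V → Prop) (s : Set V) : V → V → Prop :=
  fun u w => u ∉ s ∧ w ∉ s ∧ (r u w ∨ ∃ p ∈ s, r u p ∧ r p w)

lemma fvs_iff_irrefl_transGen {V : Type*} {A : V → V → Prop} {X : Set V} :
    FVS A X ↔ Std.Irrefl (TransGen (deleteVerts A X)) := by
  refine ⟨fun hX => ⟨fun v hcycle => ?_⟩, fun hirr v _ => hirr.irrefl v⟩
  have hv : v ∉ X := by
    cases hcycle with
    | single h => exact h.2.2
    | tail _ h => exact h.2.2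
  exact hX v hv hcycle

section Bypass

variable {V : Type*} {r : V → V → Prop} {s : Set V}

lemma transGen_of_bypass {u w : V} (h : bypass r s u w) : TransGen r u w := by
  obtain ⟨-, -, huw | ⟨p, -, hup, hpw⟩⟩ := h
  · exact .single huw
  · exact .head hup (.single hpw)

lemma irrefl_transGen_bypass (hr : Std.Irrefl (TransGen r)) :
    Std.Irrefl (TransGen (bypass r s)) :=
  ⟨fun v hcycle => hr.irrefl v (TransGen.closed (fun _ _ => transGen_of_bypass) v v hcycle)⟩

variable (hs : ∀ u w, r u w → u ∉ s ∨ w ∉ s)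
include hs

lemma notMem_of_rel_of_mem {u w : V} (huw : r u w) (hu : u ∈ s) : w ∉ s :=
  (hs u w huw).resolve_left (not_not.2 hu)

lemma transGen_bypass_of_transGen {u w : V} (hu : u ∉ s) (h : TransGen r u w) :
    (w ∉ s → TransGen (bypass r s) u w) ∧
      (w ∈ s → ∃ v ∉ s, ReflTransGen (bypass r s) u v ∧ r v w) := by
  induction h with
  | single huw =>
    exact ⟨fun hw => .single ⟨hu, hw, .inl huw⟩, fun _ => ⟨u, hu, .refl, huw⟩⟩
  | @tail x w _ hxw ih =>
    by_cases hx : x ∈ s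
    · obtain ⟨v, hv, hpath, hvx⟩ := ih.2 hx
      have hw : w ∉ s := notMem_of_rel_of_mem hs hxw hx
      exact ⟨fun _ => TransGen.tail' hpath ⟨hv, hw, .inr ⟨x, hx, hvx, hxw⟩⟩,
        fun h => absurd h hw⟩
    · have hpath := ih.1 hx
      exact ⟨fun hw => hpath.tail ⟨hx, hw, .inl hxw⟩,
        fun _ => ⟨x, hx, hpath.to_reflTransGen, hxw⟩⟩

lemma exists_transGen_self_notMem {v : V} (hcycle : TransGen r v v) :
    ∃ u ∉ s, TransGen r u u := by
  by_cases hv : v ∈ s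
  · obtain ⟨u, hvu, hu⟩ := TransGen.head'_iff.1 hcycle
    exact ⟨u, notMem_of_rel_of_mem hs hvu hv, TransGen.tail' hu hvu⟩
  · exact ⟨v, hv, hcycle⟩

lemma irrefl_transGen_bypass_iff :
    Std.Irrefl (TransGen (bypass r s)) ↔ Std.Irrefl (TransGen r) := by
  refine ⟨fun hirr => ⟨fun v hcycle => ?_⟩, irrefl_transGen_bypass⟩
  obtain ⟨u, hu, hcycle'⟩ := exists_transGen_self_notMem hs hcycle
  exact hirr.irrefl u ((transGen_bypass_of_transGen hs hu hcycle').1 hu)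

end Bypass

lemma deleteVerts_bypass {V : Type*} {A : V → V → Prop} {P X : Set V} (hX : X ⊆ Pᶜ) :
    deleteVerts (bypass A P) X = bypass (deleteVerts A X) P := by
  have hPX : ∀ p ∈ P, p ∉ X := fun p hp hpX => hX hpX hp
  ext u w
  simp only [deleteVerts, bypass]
  constructor
  · rintro ⟨⟨hu, hw, huw | ⟨p, hp, hup, hpw⟩⟩, huX, hwX⟩
    · exact ⟨hu, hw, .inl ⟨huw, huX, hwX⟩⟩
    · exact ⟨hu, hw, .inr ⟨p, hp, ⟨hup, huX, hPX p hp⟩, hpw, hPX p hp, hwX⟩⟩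
  · rintro ⟨hu, hw, ⟨huw, huX, hwX⟩ | ⟨p, hp, ⟨hup, huX, -⟩, hpw, -, hwX⟩⟩
    · exact ⟨⟨hu, hw, .inl huw⟩, huX, hwX⟩
    · exact ⟨⟨hu, hw, .inr ⟨p, hp, hup, hpw⟩⟩, huX, hwX⟩

theorem fvs_reduced_iff_general {V : Type*} (A : V → V → Prop) (P : Set V)
    (hP : ∀ u v, A u v → u ∉ P ∨ v ∉ P)
    (A' : V → V → Prop)
    (hA' : ∀ h h', A' h h' ↔ (h ∉ P ∧ h' ∉ P ∧ (A h h' ∨ ∃ p ∈ P, A h p ∧ A p h')))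
    (X : Set V) (hX : X ⊆ Pᶜ) :
    FVS A' X ↔ FVS A X := by
  have hA'_eq : A' = bypass A P := funext₂ fun h h' => propext (hA' h h')
  have hP_deleted : ∀ u w, deleteVerts A X u w → u ∉ P ∨ w ∉ P :=
    fun u w huw => hP u w huw.1
  rw [fvs_iff_irrefl_transGen, fvs_iff_irrefl_transGen, hA'_eq, deleteVerts_bypass hX]
  exact irrefl_transGen_bypass_iff hP_deleted

/-- Let `D` have vertex partition `V_H ∪ V_P` (`V_P = P`, `V_H = Pᶜ`) with no
arcs inside `V_P`. Let `D'` on `V_H` have the arcs of `D` between `V_H`-vertices plus an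
arc `(h, h')` whenever `D` has arcs `(h, p)` and `(p, h')` with `p ∈ V_P`. Then a subset
`X ⊆ V_H` is a feedback vertex set of `D'` iff it is one of `D`. -/
theorem fvs_reduced_iff {V : Type*} [Fintype V] (A : V → V → Prop) (P : Set V)
    (hP : ∀ u v, A u v → u ∉ P ∨ v ∉ P)
    (A' : V → V → Prop)
    (hA' : ∀ h h', A' h h' ↔ (h ∉ P ∧ h' ∉ P ∧ (A h h' ∨ ∃ p ∈ P, A h p ∧ A p h')))
    (X : Set V) (hX : X ⊆ Pᶜ) :
    FVS A' X ↔ FVS A X :=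
  fvs_reduced_iff_general A P hP A' hA' X hX
end

section
/- The minimum directed feedback vertex set problem reduces to the Hadamard gates degadgetization problem: for any directed graph G = (V, A), the instance with Pauli products P^{(u,v)} (for each arc (u,v) ∈ A) acting as Z on coordinates u+|V| and v and identity elsewhere, and pairs H = {(u, u+|V|) : u ∈ V}, yields a constructed constraint digraph G' on vertices {h_u : u ∈ V} whose arc set {(h_u, h_v) : (u,v) ∈ A} makes G' isomorphic to G; hence X ⊆ V_H is a minimum feasible solution of the degadgetization instance iff the corresponding vertex set is a minimum feedback vertex set of G. -/
/-- The Pauli product `P^(k)` for the arc `k = (u, v)`: it acts as `Z` exactly on qubit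
`u + |V|` (encoded `Sum.inr u`) and on qubit `v` (encoded `Sum.inl v`). `Pz k q` says
`P^(k)` is not the identity at qubit `q`. -/
def Pz {V : Type*} (k : V × V) (q : V ⊕ V) : Prop :=
  q = Sum.inr k.1 ∨ q = Sum.inl k.2

/-- The arc relation of the constructed constraint digraph `G'` on the vertices `h_u`
(identified with `u : V`), for the degadgetization instance with pairs
`H = {(u, u + |V|)}`, i.e. `a u = Sum.inl u`, `b u = Sum.inr u`: a direct arc when
`(a i, b j) ∈ H` with `i ≠ j`, plus composed arcs through the Pauli-product vertices. -/
def degadgArcs {V : Type*} (A : V → V → Prop) (i j : V) : Prop :=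
  (i ≠ j ∧ ∃ u : V, (Sum.inl i : V ⊕ V) = Sum.inl u ∧ (Sum.inr j : V ⊕ V) = Sum.inr u) ∨
  ∃ k : V × V, A k.1 k.2 ∧ Pz k (Sum.inr i) ∧ Pz k (Sum.inl j)

theorem degadgArcs_iff {V : Type*} (A : V → V → Prop) (i j : V) :
    degadgArcs A i j ↔ A i j := by
  constructor
  · rintro (⟨hij, u, hu1, hu2⟩ | ⟨k, hk, hki, hkj⟩)
    · rw [Sum.inl.injEq] at hu1; rw [Sum.inr.injEq] at hu2
      exact absurd (hu1.trans hu2.symm) hij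
    · rcases hki with h | h
      · rcases hkj with h' | h'
        · cases h'
        · obtain rfl : k.1 = i := (Sum.inr.injEq ..).mp h.symm
          obtain rfl : k.2 = j := (Sum.inl.injEq ..).mp h'.symm
          exact hk
      · cases h
  · intro h
    exact Or.inr ⟨(i, j), h, Or.inl rfl, Or.inr rfl⟩

/-- For the degadgetization instance built from a digraph `G = (V, A)`, the
constructed constraint digraph `G'` has exactly the arcs of `G` (so `G'` is isomorphic to
`G`), and hence `X` is a minimum feasible solution (minimum feedback vertex set of `G'`)
iff it is a minimum feedback vertex set of `G`. -/
theorem degadg_reduction {V : Type*} [Fintype V] (A : V → V → Prop) :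
    (∀ i j, degadgArcs A i j ↔ A i j) ∧
    ∀ X : Set V,
      ((FVS (degadgArcs A) X ∧ ∀ Y : Set V, FVS (degadgArcs A) Y → X.ncard ≤ Y.ncard) ↔
       (FVS A X ∧ ∀ Y : Set V, FVS A Y → X.ncard ≤ Y.ncard)) := by
  have harc : degadgArcs A = A := by
    funext i j; exact propext (degadgArcs_iff A i j)
  exact ⟨fun i j => degadgArcs_iff A i j, fun X => by rw [harc]⟩
end
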